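/- arXiv:1804.03450 — 5 statements merged into one kernel-verified Lean document; each statement's English description precedes it below -/
import Mathlib

section
/- Let f : [0,1]^d → [0,1]^d be a contraction map with respect to the ℓ_p norm (1 ≤ p < ∞) with Lipschitz constant c ∈ (0,1). Let s, s' be slices such that s' fixes exactly one additional coordinate i compared to s and agrees with s on all coordinates fixed by s. Let x be the unique fixpoint of the slice restriction f|_s and y the unique fixpoint of f|_{s'}. Then (x_i − y_i)(f(y)_i − y_i) > 0, provided x_i ≠ y_i. -/
open Finset

/-- The ℓ_p norm on `Fin d → ℝ`. -/
noncomputable def lpNorm {d : ℕ} (p : ℝ) (x : Fin d → ℝ) : ℝ :=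
  (∑ i, |x i| ^ p) ^ (1 / p)

/-- Let `f : [0,1]^d → [0,1]^d` be a contraction w.r.t. the ℓ_p norm (1 ≤ p < ∞)
with Lipschitz constant `c ∈ (0,1)`.  Let `s, s'` be slices such that `s'` fixes
exactly one additional coordinate `i` compared to `s`, agreeing with `s` elsewhere.
Let `x` be the unique fixpoint of the slice restriction `f|_s` and `y` the unique
fixpoint of `f|_{s'}`.  Then `(x_i − y_i)(f(y)_i − y_i) > 0`, provided `x_i ≠ y_i`. -/
theorem slice_fixpoint_direction {d : ℕ} (p : ℝ) (hp : 1 ≤ p)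
    (c : ℝ) (hc : c ∈ Set.Ioo (0 : ℝ) 1)
    (f : (Fin d → ℝ) → (Fin d → ℝ))
    (hcube : ∀ x : Fin d → ℝ, (∀ i, x i ∈ Set.Icc (0 : ℝ) 1) →
      ∀ i, f x i ∈ Set.Icc (0 : ℝ) 1)
    (hcontr : ∀ x y : Fin d → ℝ, (∀ i, x i ∈ Set.Icc (0 : ℝ) 1) →
      (∀ i, y i ∈ Set.Icc (0 : ℝ) 1) →
      lpNorm p (fun i => f x i - f y i) ≤ c * lpNorm p (fun i => x i - y i))
    (s s' : Fin d → Option ℝ) (i : Fin d)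
    (hsvals : ∀ j a, s j = some a → a ∈ Set.Icc (0 : ℝ) 1)
    (hs'vals : ∀ j a, s' j = some a → a ∈ Set.Icc (0 : ℝ) 1)
    (hagree : ∀ j, j ≠ i → s' j = s j)
    (hfree : s i = none) (hfixed : ∃ t : ℝ, s' i = some t)
    (x y : Fin d → ℝ)
    (hxcube : ∀ j, x j ∈ Set.Icc (0 : ℝ) 1)
    (hycube : ∀ j, y j ∈ Set.Icc (0 : ℝ) 1)
    (hxfix₁ : ∀ j a, s j = some a → x j = a)
    (hxfix₂ : ∀ j, s j = none → f x j = x j)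
    (hyfix₁ : ∀ j a, s' j = some a → y j = a)
    (hyfix₂ : ∀ j, s' j = none → f y j = y j)
    (hne : x i ≠ y i) :
    (x i - y i) * (f y i - y i) > 0 := by
  have hp0 : (0:ℝ) < p := lt_of_lt_of_le one_pos hp
  obtain ⟨hc0, hc1⟩ := hc
  have hfxi : f x i = x i := hxfix₂ i hfree
  -- set up the two sums
  set A := ∑ j, |x j - y j| ^ p with hA
  set B := ∑ j, |f x j - f y j| ^ p with hB
  have hAnn : ∀ j : Fin d, (0:ℝ) ≤ |x j - y j| ^ p := fun j =>
    Real.rpow_nonneg (abs_nonneg _) p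
  have hBnn : ∀ j : Fin d, (0:ℝ) ≤ |f x j - f y j| ^ p := fun j =>
    Real.rpow_nonneg (abs_nonneg _) p
  have hApos : 0 < A := by
    have h1 : (0:ℝ) < |x i - y i| ^ p :=
      Real.rpow_pos_of_pos (abs_pos.mpr (sub_ne_zero.mpr hne)) p
    have h2 : |x i - y i| ^ p ≤ A :=
      Finset.single_le_sum (fun j _ => hAnn j) (Finset.mem_univ i)
    linarith
  have hB0 : 0 ≤ B := Finset.sum_nonneg fun j _ => hBnn j
  have hA0 : 0 ≤ A := le_of_lt hApos
  -- contraction gives B < A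
  have hBA : B < A := by
    have h1 := hcontr x y hxcube hycube
    unfold lpNorm at h1
    have hArt : (0:ℝ) < A ^ (1/p) := Real.rpow_pos_of_pos hApos _
    have h2 : B ^ (1/p) < A ^ (1/p) := by
      calc B ^ (1/p) ≤ c * A ^ (1/p) := h1
        _ < 1 * A ^ (1/p) := by nlinarith
        _ = A ^ (1/p) := one_mul _
    have h3 : (B ^ (1/p)) ^ p < (A ^ (1/p)) ^ p :=
      Real.rpow_lt_rpow (Real.rpow_nonneg hB0 _) h2 hp0
    rwa [one_div, Real.rpow_inv_rpow hB0 (ne_of_gt hp0),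
      Real.rpow_inv_rpow hA0 (ne_of_gt hp0)] at h3
  -- compare the sums termwise off coordinate i
  have hrest : ∑ j ∈ {i}ᶜ, |x j - y j| ^ p ≤ ∑ j ∈ {i}ᶜ, |f x j - f y j| ^ p := by
    apply Finset.sum_le_sum
    intro j hj
    have hji : j ≠ i := by simpa using hj
    cases hsj : s j with
    | none =>
        rw [hxfix₂ j hsj, hyfix₂ j (by rw [hagree j hji, hsj])]
    | some a =>
        have hx : x j = a := hxfix₁ j a hsj
        have hy : y j = a := hyfix₁ j a (by rw [hagree j hji, hsj])
        rw [hx, hy, sub_self, abs_zero, Real.zero_rpow (ne_of_gt hp0)]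
        exact hBnn j
  have hAsplit : A = |x i - y i| ^ p + ∑ j ∈ {i}ᶜ, |x j - y j| ^ p :=
    Fintype.sum_eq_add_sum_compl i _
  have hBsplit : B = |f x i - f y i| ^ p + ∑ j ∈ {i}ᶜ, |f x j - f y j| ^ p :=
    Fintype.sum_eq_add_sum_compl i _
  have hkey : |x i - f y i| ^ p < |x i - y i| ^ p := by
    have : |f x i - f y i| ^ p < |x i - y i| ^ p := by
      rw [hAsplit, hBsplit] at hBA; linarith
    rwa [hfxi] at this
  have habs : |x i - f y i| < |x i - y i| := by
    by_contra h
    push_neg at h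
    exact absurd (Real.rpow_le_rpow (abs_nonneg _) h (le_of_lt hp0)) (not_le.mpr hkey)
  rw [abs_sub_lt_iff] at habs
  rcases lt_or_gt_of_ne hne with h | h
  · have h1 : |x i - y i| = y i - x i := by rw [abs_sub_comm, abs_of_pos (by linarith)]
    rw [h1] at habs
    have : f y i - y i < 0 := by linarith [habs.2]
    nlinarith
  · have h1 : |x i - y i| = x i - y i := abs_of_pos (by linarith)
    rw [h1] at habs
    have : 0 < f y i - y i := by linarith [habs.1]
    nlinarith
end

section
/- In the EndOfPotentialLine instance constructed from a P-matrix LCP via Lemke's algorithm, if u ≠ v are vertices with v = S(u) and u = P(v) (a valid edge), then V(u) < V(v), i.e., the potential strictly increases along every valid edge; hence the instance has no solution of the 'local potential maximum' type. -/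
/-- In the EndOfPotentialLine instance constructed from a P-matrix LCP via Lemke's
algorithm: vertices are bit-strings, each valid vertex `u` carries a value `z u` of
the auxiliary Lemke variable lying in `[0, Δ]`, distinct `z`-values are separated
by at least `1/Δ²`, the potential is `V u = ⌊Δ²(Δ − z u)⌋`, and `z` strictly
decreases along every valid edge.  Then the potential strictly increases along
every valid edge: if `u ≠ v`, `v = S u` and `u = P v`, then `V u < V v`
(hence no "local potential maximum" solution exists). -/
theorem plcp_eopl_no_local_max {n : ℕ}
    (S P : (Fin n → Bool) → (Fin n → Bool))
    (z : (Fin n → Bool) → ℚ) (Δ : ℚ) (hΔ : 1 ≤ Δ)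
    (hzrange : ∀ u, z u ∈ Set.Icc (0 : ℚ) Δ)
    (hsep : ∀ u v, z u ≠ z v → 1 / Δ ^ 2 ≤ |z u - z v|)
    (V : (Fin n → Bool) → ℤ)
    (hV : ∀ u, V u = ⌊Δ ^ 2 * (Δ - z u)⌋)
    (hdec : ∀ u v, u ≠ v → v = S u → u = P v → z v < z u) :
    ∀ u v, u ≠ v → v = S u → u = P v → V u < V v := by
  intro u v hne hs hp
  have hz : z v < z u := hdec u v hne hs hp
  have hΔ2 : (0:ℚ) < Δ ^ 2 := by positivity
  have hsep' : 1 / Δ ^ 2 ≤ z u - z v := by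
    have h := hsep u v (ne_of_gt hz)
    rwa [abs_of_pos (by linarith)] at h
  have hgap : Δ ^ 2 * (Δ - z u) + 1 ≤ Δ ^ 2 * (Δ - z v) := by
    have : 1 ≤ Δ ^ 2 * (z u - z v) := by
      have := (div_le_iff₀ hΔ2).mp (by linarith : 1 / Δ ^ 2 ≤ z u - z v)
      linarith [this]
    ring_nf
    nlinarith
  rw [hV u, hV v]
  have h1 : ⌊Δ ^ 2 * (Δ - z u)⌋ + 1 = ⌊Δ ^ 2 * (Δ - z u) + 1⌋ := by
    simp [Int.floor_add_intCast, Int.floor_add_one]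
  have h2 : ⌊Δ ^ 2 * (Δ - z u) + 1⌋ ≤ ⌊Δ ^ 2 * (Δ - z v)⌋ := Int.floor_le_floor hgap
  omega
end

section
/- Let f : [0,1]^d → [0,1]^d be a contraction with Lipschitz constant c ∈ (0,1) in the ℓ_1 norm, let ε ∈ (0,1), and set ε_i = ε/2^{2i}. Fix a slice s with fixed coordinates {1,…,k−1} and let x* be the unique fixpoint of f|_s. If a point v ∈ [0,1]^d with v agreeing with s on fixed coordinates satisfies |f(v)_i − v_i| ≤ ε_i for all i > k, then either |f(v)_k − v_k| ≤ ε_k, or (f(v)_k − v_k)(x*_k − v_k) > 0. -/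
open Finset

lemma geom_aux (ε : ℝ) (hε : 0 ≤ ε) (a d : ℕ) :
    ∑ j ∈ Finset.Ico (a + 1) d, ε / 2 ^ (2 * (j + 1)) ≤ ε / 2 ^ (2 * (a + 1)) := by
  rw [Finset.sum_Ico_eq_sum_range]
  have h1 : ∀ m : ℕ, ε / 2 ^ (2 * (a + 1 + m + 1)) = ε / 2 ^ (2 * (a + 2)) * (1/2 : ℝ) ^ (2*m) := by
    intro m
    rw [div_pow, one_pow, div_mul_div_comm, mul_one, ← pow_add]
    congr 1
    ring
  calc ∑ m ∈ Finset.range (d - (a+1)), ε / 2 ^ (2 * (a + 1 + m + 1))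
      = ∑ m ∈ Finset.range (d - (a+1)), ε / 2 ^ (2 * (a + 2)) * (1/2 : ℝ) ^ (2*m) :=
        Finset.sum_congr rfl fun m _ => h1 m
    _ = ε / 2 ^ (2 * (a + 2)) * ∑ m ∈ Finset.range (d - (a+1)), (1/2 : ℝ) ^ (2*m) := by
        rw [Finset.mul_sum]
    _ ≤ ε / 2 ^ (2 * (a + 2)) * 2 := by
        apply mul_le_mul_of_nonneg_left _ (by positivity)
        calc ∑ m ∈ Finset.range (d - (a+1)), (1/2 : ℝ) ^ (2*m)
            ≤ ∑ m ∈ Finset.range (d - (a+1)), (1/2 : ℝ) ^ m := by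
              apply Finset.sum_le_sum
              intro m _
              apply pow_le_pow_of_le_one (by norm_num) (by norm_num)
              omega
          _ ≤ 2 := sum_geometric_two_le _
    _ ≤ ε / 2 ^ (2 * (a + 1)) := by
        rw [div_mul_eq_mul_div, div_le_div_iff₀ (by positivity) (by positivity)]
        have h4 : (2:ℝ) ^ (2 * (a + 2)) = 2 ^ (2 * (a+1)) * 4 := by
          rw [show 2*(a+2) = 2*(a+1)+2 by ring, pow_add]; norm_num
        rw [h4]
        have := pow_pos (by norm_num : (0:ℝ) < 2) (2*(a+1))
        nlinarith [mul_nonneg hε this.le]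

lemma abs_opp (a b : ℝ) (h : a * b ≤ 0) : |a - b| = |a| + |b| := by
  rcases abs_cases a with ⟨h1,h2⟩|⟨h1,h2⟩ <;> rcases abs_cases b with ⟨h3,h4⟩|⟨h3,h4⟩ <;>
    rcases abs_cases (a-b) with ⟨h5,h6⟩|⟨h5,h6⟩ <;> nlinarith

/-- Approximate pivoting lemma for ℓ₁ contractions.  Let `f : [0,1]^d → [0,1]^d` be
a contraction with Lipschitz constant `c ∈ (0,1)` in the ℓ₁ norm, `ε ∈ (0,1)`, and
`ε_i = ε/2^{2i}` (coordinates indexed `1,…,d`).  Fix a slice `s` fixing coordinates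
`{1,…,k−1}` and let `x*` be the unique fixpoint of `f|_s`.  If `v` agrees with `s`
on the fixed coordinates and `|f(v)_i − v_i| ≤ ε_i` for all `i > k`, then either
`|f(v)_k − v_k| ≤ ε_k` or `(f(v)_k − v_k)(x*_k − v_k) > 0`. -/
theorem approx_pivot_l1 {d : ℕ} (f : (Fin d → ℝ) → (Fin d → ℝ))
    (c ε : ℝ) (hc : c ∈ Set.Ioo (0 : ℝ) 1) (hε : ε ∈ Set.Ioo (0 : ℝ) 1)
    (hcube : ∀ x : Fin d → ℝ, (∀ i, x i ∈ Set.Icc (0 : ℝ) 1) →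
      ∀ i, f x i ∈ Set.Icc (0 : ℝ) 1)
    (hcontr : ∀ x y : Fin d → ℝ, (∀ i, x i ∈ Set.Icc (0 : ℝ) 1) →
      (∀ i, y i ∈ Set.Icc (0 : ℝ) 1) →
      ∑ i, |f x i - f y i| ≤ c * ∑ i, |x i - y i|)
    (k : Fin d) (s : Fin d → ℝ) (hs : ∀ i, i < k → s i ∈ Set.Icc (0 : ℝ) 1)
    (xstar : Fin d → ℝ)
    (hx1 : ∀ i, xstar i ∈ Set.Icc (0 : ℝ) 1)
    (hx2 : ∀ i, i < k → xstar i = s i)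
    (hx3 : ∀ i, k ≤ i → f xstar i = xstar i)
    (v : Fin d → ℝ)
    (hv1 : ∀ i, v i ∈ Set.Icc (0 : ℝ) 1)
    (hv2 : ∀ i, i < k → v i = s i)
    (hv3 : ∀ i, k < i → |f v i - v i| ≤ ε / 2 ^ (2 * ((i : ℕ) + 1))) :
    |f v k - v k| ≤ ε / 2 ^ (2 * ((k : ℕ) + 1)) ∨
      (f v k - v k) * (xstar k - v k) > 0 := by
  by_cases hpos : (f v k - v k) * (xstar k - v k) > 0
  · exact Or.inr hpos
  left
  push_neg at hpos
  have key : ∑ i, |f v i - f xstar i| ≤ ∑ i, |v i - xstar i| := by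
    have hA := hcontr v xstar hv1 hx1
    have h0 : 0 ≤ ∑ i, |v i - xstar i| := Finset.sum_nonneg fun i _ => abs_nonneg _
    nlinarith [hc.2.le]
  have hsum : ∑ i, (|f v i - f xstar i| - |v i - xstar i|) ≤ 0 := by
    rw [Finset.sum_sub_distrib]; linarith
  have hk : |f v k - f xstar k| - |v k - xstar k| = |f v k - v k| := by
    rw [hx3 k le_rfl]
    have h1 := abs_opp (f v k - v k) (xstar k - v k) hpos
    have h2 : f v k - xstar k = (f v k - v k) - (xstar k - v k) := by ring
    rw [h2, h1, abs_sub_comm (v k)]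
    ring
  have hbig : ∀ i : Fin d, i ≠ k →
      (if (k:ℕ) < (i:ℕ) then -(ε / 2 ^ (2 * ((i : ℕ) + 1))) else 0)
        ≤ |f v i - f xstar i| - |v i - xstar i| := by
    intro i hi
    by_cases hlt : (k:ℕ) < (i:ℕ)
    · rw [if_pos hlt]
      have hki : k < i := Fin.lt_def.mpr hlt
      rw [hx3 i hki.le]
      have h1 := hv3 i hki
      have h2 := abs_sub_abs_le_abs_sub (v i - xstar i) (f v i - xstar i)
      have h3 : |v i - xstar i - (f v i - xstar i)| = |f v i - v i| := by
        rw [show v i - xstar i - (f v i - xstar i) = -(f v i - v i) by ring, abs_neg]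
      linarith
    · rw [if_neg hlt]
      have hik : i < k := by
        rcases lt_trichotomy i k with h | h | h
        · exact h
        · exact absurd h hi
        · exact absurd (Fin.lt_def.mp h) hlt
      have he : v i = xstar i := by rw [hv2 i hik, hx2 i hik]
      rw [he, sub_self, abs_zero, sub_zero]
      exact abs_nonneg _
  have hmem : k ∈ (Finset.univ : Finset (Fin d)) := Finset.mem_univ k
  have hsplit : ∑ i, (|f v i - f xstar i| - |v i - xstar i|)
      = (|f v k - f xstar k| - |v k - xstar k|)
        + ∑ i ∈ Finset.univ.erase k, (|f v i - f xstar i| - |v i - xstar i|) :=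
    (Finset.add_sum_erase _ _ hmem).symm
  have hrest : ∑ i ∈ Finset.univ.erase k,
      (if (k:ℕ) < (i:ℕ) then -(ε / 2 ^ (2 * ((i : ℕ) + 1))) else 0)
      ≤ ∑ i ∈ Finset.univ.erase k, (|f v i - f xstar i| - |v i - xstar i|) :=
    Finset.sum_le_sum fun i hi => hbig i (Finset.ne_of_mem_erase hi)
  have hgsum : ∑ i ∈ Finset.univ.erase k,
      (if (k:ℕ) < (i:ℕ) then -(ε / 2 ^ (2 * ((i : ℕ) + 1))) else 0)
      = -(∑ j ∈ Finset.Ico ((k:ℕ) + 1) d, ε / 2 ^ (2 * (j + 1))) := by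
    have e1 : ∀ i : Fin d, (if (k:ℕ) < (i:ℕ) then -(ε / 2 ^ (2 * ((i:ℕ) + 1))) else 0)
        = -(if (k:ℕ) < (i:ℕ) then ε / 2 ^ (2 * ((i:ℕ) + 1)) else 0) := by
      intro i; split <;> simp
    simp_rw [e1, Finset.sum_neg_distrib]
    congr 1
    have e2 : ∑ i ∈ Finset.univ.erase k, (if (k:ℕ) < (i:ℕ) then ε / 2 ^ (2 * ((i:ℕ)+1)) else 0)
        = ∑ i : Fin d, (if (k:ℕ) < (i:ℕ) then ε / 2 ^ (2 * ((i:ℕ)+1)) else 0) := by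
      rw [← Finset.add_sum_erase _ _ hmem, if_neg (lt_irrefl _), zero_add]
    rw [e2, Fin.sum_univ_eq_sum_range (fun j => if (k:ℕ) < j then ε / 2 ^ (2 * (j+1)) else 0)]
    rw [← Finset.sum_filter]
    apply Finset.sum_congr
    · ext j
      simp only [Finset.mem_filter, Finset.mem_range, Finset.mem_Ico]
      omega
    · intros; rfl
  have hfinal : |f v k - v k| ≤ ∑ j ∈ Finset.Ico ((k:ℕ) + 1) d, ε / 2 ^ (2 * (j + 1)) := by
    rw [hsplit, hk] at hsum
    rw [hgsum] at hrest
    linarith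
  exact hfinal.trans (geom_aux ε hε.1.le (k:ℕ) d)
end

section
/- Let f : [0,1]^d → [0,1]^d be a contraction with Lipschitz constant c ∈ (0,1) in the ℓ_p norm for integer p ≥ 2, and set ε_i = ε^{p^i} · p^{−2·Σ_{j=0}^{i} p^j} for ε ∈ (0,1). Fix a slice s with fixed coordinates {1,…,k−1} and let x* be the unique fixpoint of f|_s. If v ∈ [0,1]^d agrees with s on fixed coordinates and satisfies |f(v)_i − v_i| ≤ ε_i for all i > k, then either |f(v)_k − v_k| ≤ ε_k, or (f(v)_k − v_k)(x*_k − v_k) > 0. -/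
/-! If both alternatives fail, `f v` moves coordinate `k` away from `x*` by more than `ε_k`, so
`|f(v)_k − x*_k|^p ≥ |v_k − x*_k|^p + ε_k^p`. Since `v` and `x*` agree on the fixed coordinates
and `x*` is fixed on the free ones, strict contraction gives
`Σ_{i ≥ k} |f(v)_i − x*_i|^p < Σ_{i ≥ k} |v_i − x*_i|^p`. For `i > k` the two `i`-th terms differ
by at most `p·ε_i` (the mean value bound on `[0, 1]`), and the tolerances decay so fast
(`ε_i^p = p²·ε_{i+1}`, hence `ε_{i+1} ≤ ε_i / 2`) that `Σ_{i > k} p·ε_i ≤ ε_k^p`, a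
contradiction. -/

open Finset

/-- The tolerance sequence `ε_i = ε^{p^i} · p^{−2·Σ_{j=0}^{i} p^j}`. -/
noncomputable def epsSeq (p : ℕ) (ε : ℝ) (i : ℕ) : ℝ :=
  ε ^ (p ^ i) / (p : ℝ) ^ (2 * ∑ j ∈ Finset.range (i + 1), p ^ j)

lemma sum_le_two_mul_of_succ_le_half {a : ℕ → ℝ} (ha0 : ∀ n, 0 ≤ a n)
    (ha : ∀ n, a (n + 1) ≤ a n / 2) {m : ℕ} {S : Finset ℕ} (hS : ∀ n ∈ S, m ≤ n) :
    ∑ n ∈ S, a n ≤ 2 * a m := by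
  have telescope : ∀ N, ∑ j ∈ range N, a (m + j) ≤ 2 * a m - 2 * a (m + N) := by
    intro N
    induction N with
    | zero => simp
    | succ N ih => rw [sum_range_succ, ← add_assoc]; linarith [ha (m + N)]
  set N := S.sup id + 1
  have hSN : S ⊆ Ico m (m + N) := fun n hn =>
    mem_Ico.2 ⟨hS n hn, by have := le_sup (f := id) hn; simp only [id] at this; omega⟩
  calc ∑ n ∈ S, a n ≤ ∑ n ∈ Ico m (m + N), a n :=
        sum_le_sum_of_subset_of_nonneg hSN fun n _ _ => ha0 n
    _ = ∑ j ∈ range N, a (m + j) := by rw [sum_Ico_eq_sum_range, Nat.add_sub_cancel_left]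
    _ ≤ 2 * a m := by linarith [telescope N, ha0 (m + N)]

section epsSeq

variable {p : ℕ} {ε : ℝ}

lemma epsSeq_nonneg (hε : 0 ≤ ε) (n : ℕ) : 0 ≤ epsSeq p ε n := by
  unfold epsSeq; positivity

lemma epsSeq_le_one (hp : 1 ≤ p) (hε0 : 0 ≤ ε) (hε1 : ε ≤ 1) (n : ℕ) : epsSeq p ε n ≤ 1 :=
  div_le_one_of_le₀ ((pow_le_one₀ hε0 hε1).trans (one_le_pow₀ (by exact_mod_cast hp)))
    (by positivity)

lemma epsSeq_pow (hp : p ≠ 0) (ε : ℝ) (n : ℕ) :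
    epsSeq p ε n ^ p = (p : ℝ) ^ 2 * epsSeq p ε (n + 1) := by
  have hexp : 2 * ∑ j ∈ range (n + 1 + 1), p ^ j = 2 + 2 * (∑ j ∈ range (n + 1), p ^ j) * p := by
    rw [sum_range_succ']; simp only [pow_succ, ← sum_mul]; ring
  have hp' : (p : ℝ) ≠ 0 := by exact_mod_cast hp
  unfold epsSeq
  rw [div_pow, ← pow_mul, ← pow_mul, ← pow_succ, hexp]
  field_simp
  ring

lemma epsSeq_succ_le_half (hp : 2 ≤ p) (hε0 : 0 ≤ ε) (hε1 : ε ≤ 1) (n : ℕ) :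
    epsSeq p ε (n + 1) ≤ epsSeq p ε n / 2 := by
  have hpow : epsSeq p ε n ^ p ≤ epsSeq p ε n :=
    pow_le_of_le_one (epsSeq_nonneg hε0 n) (epsSeq_le_one (by omega) hε0 hε1 n) (by omega)
  have hp2 : (2 : ℝ) ≤ (p : ℝ) ^ 2 := by
    have : (2 : ℝ) ≤ p := by exact_mod_cast hp
    nlinarith
  rw [epsSeq_pow (by omega)] at hpow
  nlinarith [epsSeq_nonneg (p := p) hε0 (n + 1)]

lemma sum_Ioi_mul_epsSeq_le (hp : 2 ≤ p) (hε0 : 0 ≤ ε) (hε1 : ε ≤ 1) {d : ℕ} (k : Fin d) :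
    ∑ i ∈ Ioi k, (p : ℝ) * epsSeq p ε (i + 1) ≤ epsSeq p ε (k + 1) ^ p := by
  let shift : Fin d ↪ ℕ := ⟨fun i => i + 1, fun i j h => Fin.ext (by simpa using h)⟩
  have htail : ∑ i ∈ Ioi k, epsSeq p ε (i + 1) ≤ 2 * epsSeq p ε (k + 1 + 1) := by
    refine (sum_map (Ioi k) shift (epsSeq p ε)).symm.trans_le ?_
    refine sum_le_two_mul_of_succ_le_half (epsSeq_nonneg hε0) (epsSeq_succ_le_half hp hε0 hε1) ?_
    simp only [mem_map, mem_Ioi, shift]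
    rintro _ ⟨i, hki, rfl⟩
    exact Nat.succ_le_succ hki
  have hp2 : (2 : ℝ) ≤ p := by exact_mod_cast hp
  rw [← mul_sum, epsSeq_pow (by omega), sq, mul_assoc]
  gcongr
  linarith [mul_le_mul_of_nonneg_right hp2 (epsSeq_nonneg (p := p) hε0 (k + 1 + 1))]

end epsSeq

lemma le_pow_mul_of_rpow_one_div_le {A B c : ℝ} {p : ℕ} (hp : p ≠ 0) (hA : 0 ≤ A) (hB : 0 ≤ B)
    (h : A ^ (1 / (p : ℝ)) ≤ c * B ^ (1 / (p : ℝ))) : A ≤ c ^ p * B := by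
  have := pow_le_pow_left₀ (by positivity) h p
  rwa [mul_pow, one_div, Real.rpow_inv_natCast_pow hA hp, Real.rpow_inv_natCast_pow hB hp] at this

lemma pow_sub_pow_le_mul_abs_sub {a b : ℝ} (n : ℕ) (ha0 : 0 ≤ a) (ha1 : a ≤ 1) (hb : 0 ≤ b) :
    a ^ n - b ^ n ≤ n * |a - b| := by
  rcases le_total a b with hab | hba
  · linarith [pow_le_pow_left₀ ha0 hab n, mul_nonneg n.cast_nonneg (abs_nonneg (a - b))]
  have hmax : max |a| |b| ^ (n - 1) ≤ 1 := by
    rw [abs_of_nonneg ha0, abs_of_nonneg hb, max_eq_left hba]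
    exact pow_le_one₀ ha0 ha1
  calc a ^ n - b ^ n ≤ |a ^ n - b ^ n| := le_abs_self _
    _ ≤ |a - b| * n * max |a| |b| ^ (n - 1) := abs_pow_sub_pow_le _ _ _
    _ ≤ n * |a - b| := by
      rw [mul_comm (|a - b|)]
      exact mul_le_of_le_one_right (by positivity) hmax

lemma pow_abs_sub_sub_pow_abs_sub_le {a b y : ℝ} (n : ℕ) (ha : a ∈ Set.Icc (0 : ℝ) 1)
    (hb : b ∈ Set.Icc (0 : ℝ) 1) : |a - b| ^ n - |y - b| ^ n ≤ n * |y - a| :=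
  calc |a - b| ^ n - |y - b| ^ n ≤ n * |(|a - b| - |y - b|)| :=
        pow_sub_pow_le_mul_abs_sub n (abs_nonneg _)
          (abs_sub_le_of_nonneg_of_le ha.1 ha.2 hb.1 hb.2) (abs_nonneg _)
    _ ≤ n * |y - a| := by
        refine mul_le_mul_of_nonneg_left ?_ n.cast_nonneg
        refine (abs_abs_sub_abs_le_abs_sub _ _).trans_eq ?_
        rw [sub_sub_sub_cancel_right, abs_sub_comm]

lemma abs_sub_eq_abs_sub_add_abs_sub_of_mul_nonpos {x y z : ℝ} (h : (y - x) * (z - x) ≤ 0) :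
    |y - z| = |y - x| + |x - z| := by
  rw [show y - z = (y - x) + (x - z) by ring, abs_add_eq_add_abs_iff]
  rcases lt_trichotomy (z - x) 0 with hzx | hzx | hzx
  · exact Or.inl ⟨by nlinarith, by linarith⟩
  · rcases le_total 0 (y - x) with hyx | hyx
    · exact Or.inl ⟨hyx, by linarith⟩
    · exact Or.inr ⟨hyx, by linarith⟩
  · exact Or.inr ⟨by nlinarith, by linarith⟩

lemma sum_Ici_lt_of_contraction {ι : Type*} [Fintype ι] [LinearOrder ι] [LocallyFiniteOrderTop ι]
    {p : ℕ} (hp : p ≠ 0) {C : ℝ} (hC0 : 0 ≤ C) (hC1 : C < 1) {k : ι} {x y u w : ι → ℝ}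
    (hxy : ∀ i < k, x i = y i) (hwy : ∀ i, k ≤ i → w i = y i)
    (hcontr : ∑ i, |u i - w i| ^ p ≤ C * ∑ i, |x i - y i| ^ p) (hk : u k ≠ y k) :
    ∑ i ∈ Ici k, |u i - y i| ^ p < ∑ i ∈ Ici k, |x i - y i| ^ p := by
  have hR : ∑ i, |x i - y i| ^ p = ∑ i ∈ Ici k, |x i - y i| ^ p := by
    refine (sum_subset (subset_univ _) fun i _ hi => ?_).symm
    rw [hxy i (not_le.1 (mem_Ici.not.1 hi)), sub_self, abs_zero, zero_pow hp]
  have hL : ∑ i ∈ Ici k, |u i - y i| ^ p ≤ ∑ i, |u i - w i| ^ p :=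
    calc ∑ i ∈ Ici k, |u i - y i| ^ p = ∑ i ∈ Ici k, |u i - w i| ^ p :=
          sum_congr rfl fun i hi => by rw [hwy i (mem_Ici.1 hi)]
      _ ≤ ∑ i, |u i - w i| ^ p :=
          sum_le_sum_of_subset_of_nonneg (subset_univ _) fun i _ _ => by positivity
  have hLpos : 0 < ∑ i ∈ Ici k, |u i - y i| ^ p :=
    sum_pos' (fun i _ => by positivity)
      ⟨k, mem_Ici.2 le_rfl, pow_pos (abs_pos.2 (sub_ne_zero.2 hk)) p⟩
  rw [hR] at hcontr
  nlinarith

theorem approx_pivot_lp_general {d : ℕ} (p : ℕ) (hp : 2 ≤ p)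
    (f : (Fin d → ℝ) → (Fin d → ℝ))
    (c ε : ℝ) (hc : c ∈ Set.Ioo (0 : ℝ) 1) (hε : ε ∈ Set.Ioo (0 : ℝ) 1)
    (hcontr : ∀ x y : Fin d → ℝ, (∀ i, x i ∈ Set.Icc (0 : ℝ) 1) →
      (∀ i, y i ∈ Set.Icc (0 : ℝ) 1) →
      (∑ i, |f x i - f y i| ^ (p : ℝ)) ^ (1 / (p : ℝ)) ≤
        c * (∑ i, |x i - y i| ^ (p : ℝ)) ^ (1 / (p : ℝ)))
    (k : Fin d) (s : Fin d → ℝ)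
    (xstar : Fin d → ℝ)
    (hx1 : ∀ i, xstar i ∈ Set.Icc (0 : ℝ) 1)
    (hx2 : ∀ i, i < k → xstar i = s i)
    (hx3 : ∀ i, k ≤ i → f xstar i = xstar i)
    (v : Fin d → ℝ)
    (hv1 : ∀ i, v i ∈ Set.Icc (0 : ℝ) 1)
    (hv2 : ∀ i, i < k → v i = s i)
    (hv3 : ∀ i : Fin d, k < i → |f v i - v i| ≤ epsSeq p ε ((i : ℕ) + 1)) :
    |f v k - v k| ≤ epsSeq p ε ((k : ℕ) + 1) ∨
      (f v k - v k) * (xstar k - v k) > 0 := by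
  have hp0 : p ≠ 0 := by omega
  set δ := epsSeq p ε ((k : ℕ) + 1)
  have hδ : 0 ≤ δ := epsSeq_nonneg hε.1.le _
  by_contra! ⟨hfar, hwrong⟩
  have hsplit := abs_sub_eq_abs_sub_add_abs_sub_of_mul_nonpos hwrong
  have hk : f v k ≠ xstar k :=
    sub_ne_zero.1 <| abs_pos.1 <| by rw [hsplit]; linarith [abs_nonneg (v k - xstar k)]
  have hkk : |v k - xstar k| ^ p + δ ^ p ≤ |f v k - xstar k| ^ p :=
    (pow_add_pow_le (abs_nonneg _) hδ hp0).trans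
      (pow_le_pow_left₀ (by positivity) (by rw [hsplit]; linarith) p)
  have htail : ∑ i ∈ Ioi k, (|v i - xstar i| ^ p - |f v i - xstar i| ^ p) ≤ δ ^ p := by
    refine (sum_le_sum fun i hi => ?_).trans (sum_Ioi_mul_epsSeq_le hp hε.1.le hε.2.le k)
    exact (pow_abs_sub_sub_pow_abs_sub_le p (hv1 i) (hx1 i)).trans
      (mul_le_mul_of_nonneg_left (hv3 i (mem_Ioi.1 hi)) p.cast_nonneg)
  have hcontr_pow : ∑ i, |f v i - f xstar i| ^ p ≤ c ^ p * ∑ i, |v i - xstar i| ^ p := by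
    have := hcontr v xstar hv1 hx1
    simp only [Real.rpow_natCast] at this
    exact le_pow_mul_of_rpow_one_div_le hp0 (by positivity) (by positivity) this
  have hdecrease := sum_Ici_lt_of_contraction hp0 (pow_nonneg hc.1.le p)
    (pow_lt_one₀ hc.1.le hc.2 hp0) (fun i hi => (hv2 i hi).trans (hx2 i hi).symm) hx3 hcontr_pow hk
  rw [← add_sum_Ioi_eq_sum_Ici, ← add_sum_Ioi_eq_sum_Ici] at hdecrease
  rw [sum_sub_distrib] at htail
  linarith

/-- Approximate pivoting lemma for ℓ_p contractions (`p ≥ 2`).  Let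
`f : [0,1]^d → [0,1]^d` be a contraction with Lipschitz constant `c ∈ (0,1)` in the
ℓ_p norm, `ε ∈ (0,1)` and `ε_i = ε^{p^i}·p^{−2Σ_{j=0}^i p^j}` (coordinates indexed
`1,…,d`).  Fix a slice `s` fixing coordinates `{1,…,k−1}` and let `x*` be the unique
fixpoint of `f|_s`.  If `v` agrees with `s` on the fixed coordinates and
`|f(v)_i − v_i| ≤ ε_i` for all `i > k`, then either `|f(v)_k − v_k| ≤ ε_k` or
`(f(v)_k − v_k)(x*_k − v_k) > 0`. -/
theorem approx_pivot_lp {d : ℕ} (p : ℕ) (hp : 2 ≤ p)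
    (f : (Fin d → ℝ) → (Fin d → ℝ))
    (c ε : ℝ) (hc : c ∈ Set.Ioo (0 : ℝ) 1) (hε : ε ∈ Set.Ioo (0 : ℝ) 1)
    (hcube : ∀ x : Fin d → ℝ, (∀ i, x i ∈ Set.Icc (0 : ℝ) 1) →
      ∀ i, f x i ∈ Set.Icc (0 : ℝ) 1)
    (hcontr : ∀ x y : Fin d → ℝ, (∀ i, x i ∈ Set.Icc (0 : ℝ) 1) →
      (∀ i, y i ∈ Set.Icc (0 : ℝ) 1) →
      (∑ i, |f x i - f y i| ^ (p : ℝ)) ^ (1 / (p : ℝ)) ≤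
        c * (∑ i, |x i - y i| ^ (p : ℝ)) ^ (1 / (p : ℝ)))
    (k : Fin d) (s : Fin d → ℝ) (hs : ∀ i, i < k → s i ∈ Set.Icc (0 : ℝ) 1)
    (xstar : Fin d → ℝ)
    (hx1 : ∀ i, xstar i ∈ Set.Icc (0 : ℝ) 1)
    (hx2 : ∀ i, i < k → xstar i = s i)
    (hx3 : ∀ i, k ≤ i → f xstar i = xstar i)
    (v : Fin d → ℝ)
    (hv1 : ∀ i, v i ∈ Set.Icc (0 : ℝ) 1)
    (hv2 : ∀ i, i < k → v i = s i)
    (hv3 : ∀ i : Fin d, k < i → |f v i - v i| ≤ epsSeq p ε ((i : ℕ) + 1)) :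
    |f v k - v k| ≤ epsSeq p ε ((k : ℕ) + 1) ∨
      (f v k - v k) * (xstar k - v k) > 0 :=
  approx_pivot_lp_general p hp f c ε hc hε hcontr k s xstar hx1 hx2 hx3 v hv1 hv2 hv3
end

section
/- With ε_i = ε^{p^i}·p^{−2·Σ_{j=0}^{i} p^j} for integer p ≥ 2, ε ∈ (0,1), and any k < d, the tail sum satisfies Σ_{j=k+1}^{d} p·ε_j < ε_k^p. -/
open Finset

lemma S_lb (p k : ℕ) (hp : 2 ≤ p) : ∀ j, k + 1 ≤ j →
    p * (∑ i ∈ range (k+1), p ^ i) + (j - k) ≤ ∑ i ∈ range (j+1), p ^ i := by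
  intro j hj
  induction j with
  | zero => omega
  | succ n ih =>
    rcases Nat.lt_or_ge (k+1) (n+1) with h | h
    · have h1 := ih (by omega)
      have h3 : ∑ i ∈ range (n+1+1), p ^ i = ∑ i ∈ range (n+1), p ^ i + p ^ (n+1) :=
        Finset.sum_range_succ _ _
      have h2 : (1:ℕ) ≤ p ^ (n+1) := Nat.one_le_pow _ _ (by omega)
      omega
    · have hk : n = k := by omega
      subst hk
      have h3 : ∑ i ∈ range (n+1+1), p ^ i = p * ∑ i ∈ range (n+1), p ^ i + 1 := by
        rw [Finset.sum_range_succ' (fun i => p ^ i) (n+1), Finset.mul_sum]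
        congr 1
        exact Finset.sum_congr rfl fun i _ => by ring
      omega

lemma key_nat (p k : ℕ) (hp : 2 ≤ p) (j : ℕ) (hj : k + 1 ≤ j) :
    p * (p ^ (2 * (p * ∑ i ∈ range (k+1), p ^ i)) * 2 ^ (j - k))
      ≤ p ^ (2 * ∑ i ∈ range (j+1), p ^ i) := by
  have hS := S_lb p k hp j hj
  set Sk := ∑ i ∈ range (k+1), p ^ i
  set Sj := ∑ i ∈ range (j+1), p ^ i
  set m := j - k with hm
  have hm1 : 1 ≤ m := by omega
  have h1 : p ^ (2 * Sj) ≥ p ^ (2 * (p * Sk) + 2 * m) :=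
    Nat.pow_le_pow_right (by omega) (by omega)
  calc p * (p ^ (2 * (p * Sk)) * 2 ^ m)
      ≤ p ^ (2 * (p * Sk)) * (p * 2 ^ m) := by ring_nf; omega
    _ ≤ p ^ (2 * (p * Sk)) * p ^ (2 * m) := by
        apply Nat.mul_le_mul_left
        have : p * 2 ^ m ≤ p * p ^ (2*m - 1) := by
          apply Nat.mul_le_mul_left
          calc 2 ^ m ≤ 2 ^ (2*m-1) := Nat.pow_le_pow_right (by omega) (by omega)
            _ ≤ p ^ (2*m-1) := Nat.pow_le_pow_left hp _
        calc p * 2 ^ m ≤ p * p ^ (2*m-1) := this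
          _ = p ^ (2*m) := by rw [← pow_succ']; congr 1; omega
    _ = p ^ (2 * (p * Sk) + 2 * m) := by rw [pow_add]
    _ ≤ p ^ (2 * Sj) := h1

lemma key_real (p : ℕ) (hp : 2 ≤ p) (ε : ℝ) (hε : ε ∈ Set.Ioo (0 : ℝ) 1)
    (k j : ℕ) (hj : k + 1 ≤ j) :
    (p : ℝ) * epsSeq p ε j ≤ (epsSeq p ε k) ^ p * (1/2) ^ (j - k) := by
  obtain ⟨hε0, hε1⟩ := hε
  have hp0 : (0:ℝ) < p := by positivity
  set Sk := ∑ i ∈ range (k+1), p ^ i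
  set Sj := ∑ i ∈ range (j+1), p ^ i
  have hrhs : (epsSeq p ε k) ^ p * (1/2:ℝ) ^ (j - k)
      = ε ^ (p ^ (k+1)) / ((p:ℝ) ^ (2 * (p * Sk)) * 2 ^ (j-k)) := by
    unfold epsSeq
    rw [div_pow, ← pow_mul, ← pow_mul]
    rw [show p ^ k * p = p ^ (k+1) from (pow_succ p k).symm]
    rw [show 2 * Sk * p = 2 * (p * Sk) by ring]
    rw [div_pow (1:ℝ), one_pow, div_mul_div_comm, mul_one]
  rw [hrhs]
  unfold epsSeq
  rw [mul_div_assoc', div_le_div_iff₀ (by positivity) (by positivity)]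
  have h1 : ε ^ (p ^ j) ≤ ε ^ (p ^ (k+1)) :=
    pow_le_pow_of_le_one hε0.le hε1.le (Nat.pow_le_pow_right (by omega) hj)
  have h2 : (p:ℝ) * ((p:ℝ) ^ (2 * (p * Sk)) * 2 ^ (j-k)) ≤ (p:ℝ) ^ (2 * Sj) := by
    have := key_nat p k hp j hj
    calc (p:ℝ) * ((p:ℝ) ^ (2 * (p * Sk)) * 2 ^ (j-k))
        = ((p * (p ^ (2 * (p * Sk)) * 2 ^ (j-k)) : ℕ) : ℝ) := by push_cast; ring
      _ ≤ ((p ^ (2 * Sj) : ℕ) : ℝ) := by exact_mod_cast this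
      _ = (p:ℝ) ^ (2 * Sj) := by push_cast; ring
  calc (p:ℝ) * ε ^ (p ^ j) * ((p:ℝ) ^ (2 * (p * Sk)) * 2 ^ (j-k))
      ≤ (p:ℝ) * ε ^ (p ^ (k+1)) * ((p:ℝ) ^ (2 * (p * Sk)) * 2 ^ (j-k)) := by
        gcongr
    _ = ε ^ (p ^ (k+1)) * ((p:ℝ) * ((p:ℝ) ^ (2 * (p * Sk)) * 2 ^ (j-k))) := by ring
    _ ≤ ε ^ (p ^ (k+1)) * (p:ℝ) ^ (2 * Sj) := by gcongr

lemma half_sum (k : ℕ) : ∀ d, k ≤ d →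
    ∑ j ∈ Finset.Icc (k+1) d, (1/2:ℝ) ^ (j - k) = 1 - (1/2) ^ (d - k) := by
  intro d hd
  induction d with
  | zero =>
    have : k = 0 := by omega
    subst this; simp
  | succ n ih =>
    rcases Nat.lt_or_ge n k with h | h
    · have : k = n + 1 := by omega
      subst this
      simp
    · rw [Finset.sum_Icc_succ_top (by omega), ih h]
      have h1 : n + 1 - k = (n - k) + 1 := by omega
      rw [h1, pow_succ]
      ring

/-- With `ε_i = ε^{p^i}·p^{−2·Σ_{j=0}^{i} p^j}` for integer `p ≥ 2`, `ε ∈ (0,1)` and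
any `k < d`, the tail sum satisfies `Σ_{j=k+1}^{d} p·ε_j < ε_k^p`. -/
theorem epsSeq_tail_sum (p : ℕ) (hp : 2 ≤ p) (ε : ℝ) (hε : ε ∈ Set.Ioo (0 : ℝ) 1)
    (k d : ℕ) (hkd : k < d) :
    ∑ j ∈ Finset.Icc (k + 1) d, (p : ℝ) * epsSeq p ε j < (epsSeq p ε k) ^ p := by
  have hpos : (0:ℝ) < (epsSeq p ε k) ^ p := by
    unfold epsSeq
    have := hε.1
    have hp0 : (0:ℝ) < p := by positivity
    positivity
  calc ∑ j ∈ Finset.Icc (k + 1) d, (p : ℝ) * epsSeq p ε j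
      ≤ ∑ j ∈ Finset.Icc (k + 1) d, (epsSeq p ε k) ^ p * (1/2) ^ (j - k) := by
        apply Finset.sum_le_sum
        intro j hj
        exact key_real p hp ε hε k j (Finset.mem_Icc.mp hj).1
    _ = (epsSeq p ε k) ^ p * ∑ j ∈ Finset.Icc (k + 1) d, (1/2:ℝ) ^ (j - k) := by
        rw [Finset.mul_sum]
    _ < (epsSeq p ε k) ^ p * 1 := by
        apply mul_lt_mul_of_pos_left _ hpos
        rw [half_sum k d hkd.le]
        have : (0:ℝ) < (1/2) ^ (d - k) := by positivity
        linarith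
    _ = (epsSeq p ε k) ^ p := mul_one _
end
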